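/- Let X_1, X_2, …, X_n be i.i.d. real-valued, square-integrable random variables with common mean E[X_i] = m and common variance V[X_i] = σ². Then for every k with 1 ≤ k ≤ n, the expectation of the k-th order statistic X_(k) (the k-th smallest among X_1, …, X_n) satisfies E[X_(k)] ≤ m + σ·√((k−1)/(n−k+1)). -/

import Mathlib

open MeasureTheory ProbabilityTheory

/-- The `k`-th order statistic of a finite tuple of reals, with `k : Fin n` zero-indexed
(so `orderStat x ⟨j-1, _⟩` is the `j`-th smallest of the values `x 0, …, x (n-1)`). -/
noncomputable def orderStat {n : ℕ} (x : Fin n → ℝ) (k : Fin n) : ℝ :=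
  (x ∘ Tuple.sort x) k

namespace AGaux

open Finset

lemma orderStat_le_iff {n : ℕ} (x : Fin n → ℝ) (j : Fin n) (a : ℝ) :
    orderStat x j ≤ a ↔ (j : ℕ) < Fintype.card {i // x i ≤ a} := by
  have hcard : Fintype.card {i // (x ∘ Tuple.sort x) i ≤ a} = Fintype.card {i // x i ≤ a} :=
    Fintype.card_congr ((Tuple.sort x).subtypeEquiv (fun i => Iff.rfl))
  rw [show orderStat x j = (x ∘ Tuple.sort x) j from rfl,
    ← Tuple.lt_card_le_iff_apply_le_of_monotone (f := x ∘ Tuple.sort x) (a := a) (j := j)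
      (Tuple.monotone_sort x), ← Fintype.card_subtype, hcard]

lemma measurable_orderStat {n : ℕ} (j : Fin n) :
    Measurable fun x : Fin n → ℝ => orderStat x j := by
  apply measurable_of_Iic
  intro a
  have heq : (fun x : Fin n → ℝ => orderStat x j) ⁻¹' Set.Iic a
      = ⋃ S ∈ {S : Finset (Fin n) | (j : ℕ) < S.card}, ⋂ i ∈ S, {x : Fin n → ℝ | x i ≤ a} := by
    ext x
    simp only [Set.mem_preimage, Set.mem_Iic, orderStat_le_iff, Set.mem_iUnion,
      Set.mem_iInter, Set.mem_setOf_eq, Fintype.card_subtype]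
    constructor
    · intro h
      exact ⟨Finset.univ.filter fun i => x i ≤ a, h, fun i hi => (Finset.mem_filter.1 hi).2⟩
    · rintro ⟨S, hS, h⟩
      exact hS.trans_le (Finset.card_le_card fun i hi =>
        Finset.mem_filter.2 ⟨Finset.mem_univ _, h i hi⟩)
  rw [heq]
  exact MeasurableSet.biUnion (Set.to_countable _) fun S _ =>
    MeasurableSet.biInter (Set.to_countable _) fun i _ =>
      (measurable_pi_apply i) measurableSet_Iic

lemma abs_orderStat_le {n : ℕ} (x : Fin n → ℝ) (j : Fin n) :
    |orderStat x j| ≤ ∑ i, |x i| := by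
  have : orderStat x j = x (Tuple.sort x j) := rfl
  rw [this]
  exact Finset.single_le_sum (f := fun i => |x i|) (fun i _ => abs_nonneg _) (Finset.mem_univ _)

lemma key_pointwise {n : ℕ} (x : Fin n → ℝ) (k : ℕ) (hk1 : 1 ≤ k) (hkn : k ≤ n) (lam : ℝ) :
    ((n - k + 1 : ℕ) : ℝ) * max (orderStat x ⟨k - 1, Nat.lt_of_lt_of_le (Nat.sub_lt hk1 Nat.one_pos) hkn⟩ - lam) 0
      ≤ ∑ i, max (x i - lam) 0 := by
  set j : Fin n := ⟨k - 1, by omega⟩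
  have hsum : ∑ i, max (x (Tuple.sort x i) - lam) 0 = ∑ i, max (x i - lam) 0 :=
    Equiv.sum_comp (Tuple.sort x) (fun i => max (x i - lam) 0)
  have hcard : (Finset.Ici j).card = n - k + 1 := by
    rw [Fin.card_Ici]
    simp only [j]
    omega
  have h1 : (Finset.Ici j).card • max (orderStat x j - lam) 0
      ≤ ∑ i ∈ Finset.Ici j, max (x (Tuple.sort x i) - lam) 0 := by
    apply Finset.card_nsmul_le_sum
    intro i hi
    have hmono : x (Tuple.sort x j) ≤ x (Tuple.sort x i) :=
      Tuple.monotone_sort x (Finset.mem_Ici.1 hi)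
    exact max_le_max (by simpa [orderStat] using sub_le_sub_right hmono lam) le_rfl
  have h2 : ∑ i ∈ Finset.Ici j, max (x (Tuple.sort x i) - lam) 0
      ≤ ∑ i, max (x (Tuple.sort x i) - lam) 0 :=
    Finset.sum_le_sum_of_subset_of_nonneg (Finset.subset_univ _)
      (fun i _ _ => le_max_right _ _)
  calc ((n - k + 1 : ℕ) : ℝ) * max (orderStat x j - lam) 0
      = (Finset.Ici j).card • max (orderStat x j - lam) 0 := by
        rw [hcard, nsmul_eq_mul]
    _ ≤ ∑ i ∈ Finset.Ici j, max (x (Tuple.sort x i) - lam) 0 := h1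
    _ ≤ ∑ i, max (x (Tuple.sort x i) - lam) 0 := h2
    _ = ∑ i, max (x i - lam) 0 := hsum

end AGaux

set_option maxHeartbeats 1000000 in
/-- **Arnold–Groeneveld bound.**
If `X 0, …, X (n-1)` are i.i.d. square-integrable real random variables with mean `m`
and variance `σ²`, then for `1 ≤ k ≤ n` the expectation of the `k`-th order statistic
satisfies `E[X_(k)] ≤ m + σ * √((k-1)/(n-k+1))`. -/
theorem expectation_orderStat_le
    {Ω : Type*} [MeasurableSpace Ω] (P : Measure Ω) [IsProbabilityMeasure P]
    (n : ℕ) (hn : 1 ≤ n) (X : Fin n → Ω → ℝ)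
    (hmeas : ∀ i, Measurable (X i))
    (hindep : iIndepFun X P)
    (hident : ∀ i j, IdentDistrib (X i) (X j) P P)
    (hL2 : ∀ i, MemLp (X i) 2 P)
    (m σ : ℝ) (hσ : 0 ≤ σ)
    (hmean : ∀ i, ∫ ω, X i ω ∂P = m)
    (hvar : ∀ i, variance (X i) P = σ ^ 2)
    (k : ℕ) (hk1 : 1 ≤ k) (hkn : k ≤ n) :
    ∫ ω, orderStat (fun i => X i ω) ⟨k - 1, by omega⟩ ∂P ≤
      m + σ * Real.sqrt (((k : ℝ) - 1) / ((n : ℝ) - k + 1)) := by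
  classical
  set j : Fin n := ⟨k - 1, by omega⟩ with hj
  set z : Fin n := ⟨0, by omega⟩ with hz
  set OS : Ω → ℝ := fun ω => orderStat (fun i => X i ω) j with hOS
  have hXint : ∀ i, Integrable (X i) P := fun i => (hL2 i).integrable one_le_two
  have hOSmeas : Measurable OS :=
    (AGaux.measurable_orderStat j).comp (measurable_pi_lambda _ hmeas)
  have hOSint : Integrable OS P := by
    refine (integrable_finset_sum Finset.univ fun i _ => (hXint i).abs).mono'
      hOSmeas.aestronglyMeasurable ?_
    filter_upwards with ω
    rw [Real.norm_eq_abs]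
    exact AGaux.abs_orderStat_le _ j
  set R : ℝ := ((n - k + 1 : ℕ) : ℝ) with hRdef
  have hRpos : 0 < R := by
    rw [hRdef]; exact_mod_cast Nat.succ_pos _
  have hR : R = (n : ℝ) - k + 1 := by
    rw [hRdef, Nat.cast_add, Nat.cast_sub hkn, Nat.cast_one]
  set A : ℝ := ((k - 1 : ℕ) : ℝ) with hAdef
  have hA : A = (k : ℝ) - 1 := by
    rw [hAdef, Nat.cast_sub hk1, Nat.cast_one]
  have hnAR : (n : ℝ) = A + R := by rw [hA, hR]; ring
  have hmax_int : ∀ (i : Fin n) (lam : ℝ),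
      Integrable (fun ω => max (X i ω - lam) 0) P :=
    fun i lam => ((hXint i).sub (integrable_const lam)).pos_part
  have hmax_eq : ∀ (i : Fin n) (lam : ℝ),
      ∫ ω, max (X i ω - lam) 0 ∂P = ∫ ω, max (X z ω - lam) 0 ∂P := fun i lam =>
    ((hident i z).comp ((measurable_id.sub_const lam).max measurable_const)).integral_eq
  have hsqint : ∀ c : ℝ, Integrable (fun ω => (X z ω - c) ^ 2) P :=
    fun c => ((hL2 z).sub (memLp_const c)).integrable_sq
  have he1 : ∫ ω, (X z ω) ^ 2 ∂P = σ ^ 2 + m ^ 2 := by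
    have hd := variance_eq_sub (hL2 z)
    simp only [Pi.pow_apply] at hd
    rw [hvar z, hmean z] at hd
    linarith
  have hsq : ∀ c : ℝ, ∫ ω, (X z ω - c) ^ 2 ∂P = σ ^ 2 + (m - c) ^ 2 := by
    intro c
    have expand : ∀ ω, (X z ω - c) ^ 2 = (X z ω) ^ 2 - (2 * c) * X z ω + c ^ 2 :=
      fun ω => by ring
    calc ∫ ω, (X z ω - c) ^ 2 ∂P
        = ∫ ω, ((X z ω) ^ 2 - (2 * c) * X z ω + c ^ 2) ∂P := by simp_rw [expand]
      _ = (∫ ω, (X z ω) ^ 2 ∂P) - (2 * c) * (∫ ω, X z ω ∂P) + c ^ 2 := by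
          have hint1 : Integrable (fun ω => X z ω ^ 2 - 2 * c * X z ω) P :=
            (hL2 z).integrable_sq.sub ((hXint z).const_mul (2 * c))
          have hint2 : Integrable (fun ω => (2 * c) * X z ω) P := (hXint z).const_mul (2 * c)
          have hint3 : Integrable (fun ω => X z ω ^ 2) P := (hL2 z).integrable_sq
          rw [integral_add hint1 (integrable_const _), integral_sub hint3 hint2,
            integral_const_mul, integral_const]
          simp [measure_univ]
      _ = σ ^ 2 + (m - c) ^ 2 := by rw [he1, hmean z]; ring
  have hpospart : ∀ lam beta : ℝ, 0 < beta →
      ∫ ω, max (X z ω - lam) 0 ∂P ≤ (σ ^ 2 + (m - lam + beta) ^ 2) / (4 * beta) := by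
    intro lam beta hb
    have hptw : ∀ ω, max (X z ω - lam) 0 ≤ (X z ω - (lam - beta)) ^ 2 / (4 * beta) := by
      intro ω
      have h4b : (0:ℝ) < 4 * beta := by linarith
      refine max_le ?_ (by positivity)
      rw [le_div_iff₀ h4b]
      nlinarith [sq_nonneg (X z ω - lam - beta)]
    calc ∫ ω, max (X z ω - lam) 0 ∂P
        ≤ ∫ ω, (X z ω - (lam - beta)) ^ 2 / (4 * beta) ∂P :=
          integral_mono (hmax_int z lam) ((hsqint (lam - beta)).div_const _) hptw
      _ = (σ ^ 2 + (m - lam + beta) ^ 2) / (4 * beta) := by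
          rw [integral_div, hsq]; ring
  have master : ∀ lam beta : ℝ, 0 < beta →
      ∫ ω, OS ω ∂P ≤ lam + ((n : ℝ) / R) * ((σ ^ 2 + (m - lam + beta) ^ 2) / (4 * beta)) := by
    intro lam beta hb
    have hRS : ∀ ω, OS ω ≤ lam + (∑ i, max (X i ω - lam) 0) / R := by
      intro ω
      have hkk := AGaux.key_pointwise (fun i => X i ω) k hk1 hkn lam
      have h1 : OS ω - lam ≤ max (OS ω - lam) 0 := le_max_left _ _
      have h3 : max (OS ω - lam) 0 ≤ (∑ i, max (X i ω - lam) 0) / R := by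
        rw [le_div_iff₀ hRpos, mul_comm]
        exact hkk
      linarith
    have hint2 : Integrable (fun ω => lam + (∑ i, max (X i ω - lam) 0) / R) P :=
      (integrable_const lam).add
        ((integrable_finset_sum Finset.univ fun i _ => hmax_int i lam).div_const R)
    have step1 : ∫ ω, OS ω ∂P
        ≤ lam + ((n : ℝ) * ∫ ω, max (X z ω - lam) 0 ∂P) / R := by
      calc ∫ ω, OS ω ∂P
          ≤ ∫ ω, (lam + (∑ i, max (X i ω - lam) 0) / R) ∂P :=
            integral_mono hOSint hint2 hRS
        _ = lam + ((n : ℝ) * ∫ ω, max (X z ω - lam) 0 ∂P) / R := by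
            have hsum_int : ∫ ω, (∑ i, max (X i ω - lam) 0) ∂P
                = (n : ℝ) * ∫ ω, max (X z ω - lam) 0 ∂P := by
              rw [integral_finset_sum Finset.univ (fun i _ => hmax_int i lam),
                Finset.sum_congr rfl (fun i _ => hmax_eq i lam), Finset.sum_const,
                Finset.card_univ, Fintype.card_fin, nsmul_eq_mul]
            rw [integral_add (integrable_const lam)
                ((integrable_finset_sum Finset.univ fun i _ => hmax_int i lam).div_const R),
              integral_const, integral_div, hsum_int]
            simp [measure_univ]
    have hbound := hpospart lam beta hb
    calc ∫ ω, OS ω ∂P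
        ≤ lam + ((n : ℝ) * ∫ ω, max (X z ω - lam) 0 ∂P) / R := step1
      _ ≤ lam + ((n : ℝ) * ((σ ^ 2 + (m - lam + beta) ^ 2) / (4 * beta))) / R := by
          gcongr
      _ = lam + ((n : ℝ) / R) * ((σ ^ 2 + (m - lam + beta) ^ 2) / (4 * beta)) := by
          ring
  have main : ∫ ω, OS ω ∂P ≤ m + σ * Real.sqrt (A / R) := by
    rcases hσ.eq_or_lt with hσ0 | hσpos
    · -- σ = 0
      have hb : ∫ ω, OS ω ∂P ≤ m := by
        apply le_of_forall_sub_le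
        intro ε hε
        have hmm := master (m + ε) ε hε
        rw [← hσ0] at hmm
        have hz0 : m - (m + ε) + ε = 0 := by ring
        rw [hz0] at hmm
        norm_num at hmm
        linarith
      have : 0 ≤ σ * Real.sqrt (A / R) := mul_nonneg hσ (Real.sqrt_nonneg _)
      linarith
    · rcases eq_or_lt_of_le hk1 with hk1' | hk2
      · -- k = 1
        have hRn : R = (n : ℝ) := by rw [hR, ← hk1']; push_cast; ring
        have hnpos : (0:ℝ) < (n : ℝ) := by exact_mod_cast hn
        have hb : ∫ ω, OS ω ∂P ≤ m := by
          apply le_of_forall_sub_le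
          intro ε hε
          have hβpos : (0:ℝ) < σ ^ 2 / (4 * ε) := div_pos (pow_pos hσpos 2) (by linarith)
          have hmm := master (m - σ ^ 2 / (4 * ε)) (σ ^ 2 / (4 * ε)) hβpos
          have hnn : (n : ℝ) / R = 1 := by rw [hRn]; exact div_self (ne_of_gt hnpos)
          rw [hnn, one_mul] at hmm
          have hval : m - σ ^ 2 / (4 * ε)
              + (σ ^ 2 + (m - (m - σ ^ 2 / (4 * ε)) + σ ^ 2 / (4 * ε)) ^ 2)
                / (4 * (σ ^ 2 / (4 * ε))) = m + ε := by
            have hσne : σ ≠ 0 := ne_of_gt hσpos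
            have hεne : ε ≠ 0 := ne_of_gt hε
            field_simp
            ring_nf
          linarith [hmm, hval.le]
        have : 0 ≤ σ * Real.sqrt (A / R) := mul_nonneg hσ (Real.sqrt_nonneg _)
        linarith
      · -- k ≥ 2
        have hApos : (0:ℝ) < A := by
          rw [hAdef]; exact_mod_cast Nat.sub_pos_of_lt hk2
        set t := Real.sqrt (A / R) with ht
        have htpos : 0 < t := Real.sqrt_pos.2 (div_pos hApos hRpos)
        have ht2 : t ^ 2 = A / R := Real.sq_sqrt (le_of_lt (div_pos hApos hRpos))
        have hA' : A = t ^ 2 * R := by rw [ht2]; field_simp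
        have hARpos : (0:ℝ) < A + R := by linarith
        set β := σ * (A + R) / (2 * R * t) with hβ
        have hβpos : 0 < β := div_pos (mul_pos hσpos hARpos) (by positivity)
        set lam := m + σ * (A - R) / (2 * R * t) with hlam
        have hmm := master lam β hβpos
        have hσne : σ ≠ 0 := ne_of_gt hσpos
        have htne : t ≠ 0 := ne_of_gt htpos
        have hRne : R ≠ 0 := ne_of_gt hRpos
        have hml : m - lam + β = σ / t := by
          rw [hlam, hβ]
          field_simp
          ring
        rw [hml, hnAR] at hmm
        have hval : lam + ((A + R) / R) * ((σ ^ 2 + (σ / t) ^ 2) / (4 * β)) = m + σ * t := by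
          rw [hlam, hβ, hA']
          have hARne : t ^ 2 * R + R ≠ 0 := by positivity
          field_simp
          ring
        rw [hval] at hmm
        exact hmm
  calc ∫ ω, orderStat (fun i => X i ω) ⟨k - 1, by omega⟩ ∂P = ∫ ω, OS ω ∂P := rfl
    _ ≤ m + σ * Real.sqrt (A / R) := main
    _ = m + σ * Real.sqrt (((k : ℝ) - 1) / ((n : ℝ) - k + 1)) := by rw [hA, hR]
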